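/- Let Γ' be obtained from a weighted forest Γ by blowing up an edge (P,Q), creating a new vertex R, and let d = d(Γ) = d(Γ'). Then d_R = 2·d_{PQ} + d_P + d_Q - d, d_{PR} = d_P + d_{PQ}, and d_{QR} = d_Q + d_{PQ}, where d_{PQ} is the determinant of Γ with the edge (P,Q) removed, d_P, d_Q are vertex determinants in Γ, and d_R, d_{PR}, d_{QR} are the vertex and edge determinants in Γ'. -/

import Mathlib

open Classical Finset

/-- The matrix `Q(Γ)` of a weighted graph: `-a i` on the diagonal, `-1` for
adjacent vertices, `0` otherwise. -/
noncomputable def wMatrix {V : Type*} [Fintype V] (G : SimpleGraph V) (a : V → ℤ) :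
    Matrix V V ℤ :=
  Matrix.of fun i j => if i = j then -a i else if G.Adj i j then (-1 : ℤ) else 0

/-- The determinant `d(Γ)` of a weighted graph. -/
noncomputable def wDet {V : Type*} [Fintype V] (G : SimpleGraph V) (a : V → ℤ) : ℤ :=
  (wMatrix G a).det

/-- The determinant of the weighted graph obtained by deleting a set `s` of
vertices (and all incident edges). -/
noncomputable def wDetDel {V : Type*} [Fintype V] (G : SimpleGraph V) (a : V → ℤ)
    (s : Set V) : ℤ :=
  wDet (SimpleGraph.comap (Subtype.val : {v // v ∉ s} → V) G) (fun v => a v.1)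

/-- The blow-up of a weighted graph at an edge `(P,Q)`. -/
def blowupEdgeGraph {V : Type*} (G : SimpleGraph V) (P Q : V) :
    SimpleGraph (V ⊕ Unit) where
  Adj x y :=
    match x, y with
    | Sum.inl u, Sum.inl v => G.Adj u v ∧ ¬((u = P ∧ v = Q) ∨ (u = Q ∧ v = P))
    | Sum.inl u, Sum.inr _ => u = P ∨ u = Q
    | Sum.inr _, Sum.inl v => v = P ∨ v = Q
    | Sum.inr _, Sum.inr _ => False
  symm := by
    constructor
    rintro (u | u) (v | v) h
    · exact ⟨G.adj_symm h.1, fun hc => h.2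
        (hc.elim (fun h' => Or.inr ⟨h'.2, h'.1⟩) (fun h' => Or.inl ⟨h'.2, h'.1⟩))⟩
    · exact h
    · exact h
    · exact h.elim
  loopless := by
    constructor
    rintro (u | u) h
    · exact G.irrefl h.1
    · exact h.elim

/-- The weights after blowing up the edge `(P,Q)`. -/
noncomputable def blowupEdgeWeights {V : Type*} [DecidableEq V] (a : V → ℤ) (P Q : V) :
    V ⊕ Unit → ℤ :=
  Sum.elim (Function.update (Function.update a P (a P - 1)) Q (a Q - 1))
    (fun _ => (-1 : ℤ))

/-!
Let `H = Γ - (P,Q)` and `M = Q(H)`. Since `(P,Q)` is a bridge of the forest, `M` is block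
diagonal with `P` and `Q` in different blocks, so expanding `Q(Γ) = M - E_PQ - E_QP` in the rows
`P` and `Q` leaves only `d = d_PQ - d_{H-P-Q}`. Removing `R` from `Γ'` leaves `M` with the
diagonal entries at `P` and `Q` raised by one, whose determinant expands to
`d_PQ + d_P + d_Q + d_{H-P-Q}`. Removing the edge `(P,R)` instead makes `R` a leaf at `Q` with
diagonal entry `1`; its Schur complement is `M` with only the entry at `P` raised, of determinant
`d_PQ + d_P`. The edge `(Q,R)` is the same case with `P` and `Q` exchanged.
-/

namespace Matrix

variable {n R : Type*} [Fintype n] [DecidableEq n] [CommRing R]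

abbrev deleteIndices (M : Matrix n n R) (s : Set n) : Matrix {i // i ∉ s} {i // i ∉ s} R :=
  M.submatrix Subtype.val Subtype.val

theorem det_eq_det_deleteIndices_of_row_eq_single (M : Matrix n n R) (s : Set n)
    [DecidablePred (· ∈ s)] (h : ∀ i ∈ s, M i = Pi.single i 1) :
    M.det = (M.deleteIndices s).det := by
  rw [M.twoBlockTriangular_det (· ∉ s) fun i hi j hj => by
    rw [h i (not_not.mp hi), Pi.single_apply, if_neg (by rintro rfl; exact hj (not_not.mp hi))]]
  have hone : M.toSquareBlockProp (fun i => ¬i ∉ s) = 1 := by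
    ext i j
    simp [toSquareBlockProp, toBlock, h i (not_not.mp i.2), one_apply, Pi.single_apply,
      Subtype.ext_iff, eq_comm]
  rw [hone, det_one, mul_one]
  rfl

omit [Fintype n] [CommRing R] in
theorem deleteIndices_updateRow_of_mem (M : Matrix n n R) {s : Set n} {i : n} (hi : i ∈ s)
    (u : n → R) : (M.updateRow i u).deleteIndices s = M.deleteIndices s := by
  ext j k
  simp [updateRow_ne (show j.1 ≠ i from fun h => j.2 (h ▸ hi))]

theorem det_updateRow_single_self (M : Matrix n n R) (i : n) :
    (M.updateRow i (Pi.single i 1)).det = (M.deleteIndices {i}).det := by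
  rw [det_eq_det_deleteIndices_of_row_eq_single _ {i} (by simp),
    deleteIndices_updateRow_of_mem _ (Set.mem_singleton i)]

theorem det_updateRow_single_self₂ (M : Matrix n n R) {i j : n} (hij : i ≠ j) :
    ((M.updateRow i (Pi.single i 1)).updateRow j (Pi.single j 1)).det =
      (M.deleteIndices {i, j}).det := by
  rw [det_eq_det_deleteIndices_of_row_eq_single _ {i, j} (by simp [updateRow_ne hij]),
    deleteIndices_updateRow_of_mem _ (by simp), deleteIndices_updateRow_of_mem _ (by simp)]

omit [Fintype n] in
theorem add_single_eq_updateRow (M : Matrix n n R) (i j : n) (c : R) :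
    M + single i j c = M.updateRow i (M i + c • Pi.single j 1) := by
  ext k l
  by_cases hk : k = i
  · subst hk
    by_cases hl : l = j
    · simp [hl]
    · simp [hl, Ne.symm hl]
  · simp [updateRow_ne hk, Ne.symm hk]

theorem det_updateRow_add_smul (M : Matrix n n R) (i : n) (x : R) (u : n → R) :
    (M.updateRow i (M i + x • u)).det = M.det + x * (M.updateRow i u).det := by
  rw [det_updateRow_add, updateRow_eq_self, det_updateRow_smul]

theorem det_updateRow_add_smul₂ (M : Matrix n n R) {i j : n} (hij : i ≠ j) (x y : R)
    (u w : n → R) :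
    ((M.updateRow i (M i + x • u)).updateRow j (M j + y • w)).det =
      M.det + x * (M.updateRow i u).det + y * (M.updateRow j w).det +
        x * y * ((M.updateRow i u).updateRow j w).det := by
  have hj : ∀ v, (M.updateRow i v) j = M j := fun v => updateRow_ne hij.symm
  have hi : (M.updateRow j w) i = M i := updateRow_ne hij
  rw [← hj (M i + x • u), det_updateRow_add_smul, det_updateRow_add_smul,
    updateRow_comm _ hij, ← hi, det_updateRow_add_smul, updateRow_comm _ hij.symm]
  ring

theorem det_add_single_diag (M : Matrix n n R) (i : n) (c : R) :
    (M + single i i c).det = M.det + c * (M.deleteIndices {i}).det := by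
  rw [add_single_eq_updateRow, det_updateRow_add_smul, det_updateRow_single_self]

theorem det_add_single_diag₂ (M : Matrix n n R) {i j : n} (hij : i ≠ j) (x y : R) :
    (M + single i i x + single j j y).det =
      M.det + x * (M.deleteIndices {i}).det + y * (M.deleteIndices {j}).det +
        x * y * (M.deleteIndices {i, j}).det := by
  rw [add_single_eq_updateRow, add_single_eq_updateRow, updateRow_ne hij.symm,
    det_updateRow_add_smul₂ _ hij, det_updateRow_single_self, det_updateRow_single_self,
    det_updateRow_single_self₂ _ hij]

theorem det_updateRow_single_eq_zero_of_blockTriangular (M : Matrix n n R) (S : Set n)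
    [DecidablePred (· ∈ S)] (hM : ∀ k ∉ S, ∀ l ∈ S, M k l = 0) {i j : n} (hi : i ∈ S)
    (hj : j ∉ S) : (M.updateRow i (Pi.single j 1)).det = 0 := by
  have hne : ∀ k ∉ S, k ≠ i := fun k hk h => hk (h ▸ hi)
  rw [twoBlockTriangular_det _ (· ∈ S) fun k hk l hl => by
    rw [updateRow_ne (hne k hk), hM k hk l hl],
    det_eq_zero_of_row_eq_zero ⟨i, hi⟩ fun l => ?_, zero_mul]
  have hl : l.1 ≠ j := fun h => hj (h ▸ l.2)
  simp [toSquareBlockProp, toBlock, hl]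

theorem det_updateRow_single_swap (M : Matrix n n R) {i j : n} (hij : i ≠ j) :
    ((M.updateRow i (Pi.single j 1)).updateRow j (Pi.single i 1)).det =
      -((M.updateRow i (Pi.single i 1)).updateRow j (Pi.single j 1)).det := by
  have hswap : ((M.updateRow i (Pi.single i 1)).updateRow j (Pi.single j 1)).submatrix
      (Equiv.swap i j) id = (M.updateRow i (Pi.single j 1)).updateRow j (Pi.single i 1) := by
    ext k l
    by_cases hki : k = i
    · subst hki; simp [hij]
    by_cases hkj : k = j
    · subst hkj; simp [hij]
    simp [Equiv.swap_apply_of_ne_of_ne hki hkj, hki, hkj]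
  rw [← hswap, det_permute, Equiv.Perm.sign_swap hij]
  simp

theorem det_add_single_add_single_of_blockDiagonal (M : Matrix n n R) (S : Set n)
    [DecidablePred (· ∈ S)] (h₁ : ∀ k ∉ S, ∀ l ∈ S, M k l = 0)
    (h₂ : ∀ k ∈ S, ∀ l ∉ S, M k l = 0) {i j : n} (hi : i ∈ S) (hj : j ∉ S) (x y : R) :
    (M + single i j x + single j i y).det = M.det - x * y * (M.deleteIndices {i, j}).det := by
  have hij : i ≠ j := fun h => hj (h ▸ hi)
  rw [add_single_eq_updateRow, add_single_eq_updateRow, updateRow_ne hij.symm,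
    det_updateRow_add_smul₂ _ hij,
    det_updateRow_single_eq_zero_of_blockTriangular M S h₁ hi hj,
    det_updateRow_single_eq_zero_of_blockTriangular M Sᶜ (by simpa using h₂) hj (by simpa),
    det_updateRow_single_swap _ hij, det_updateRow_single_self₂ _ hij]
  ring

theorem det_deleteIndices_inr (K : Matrix (n ⊕ Unit) (n ⊕ Unit) R) :
    (K.deleteIndices {Sum.inr ()}).det = (K.submatrix Sum.inl Sum.inl).det := by
  let e : n ≃ {x : n ⊕ Unit // x ∉ ({Sum.inr ()} : Set (n ⊕ Unit))} :=
    Equiv.ofBijective (fun v => ⟨Sum.inl v, by simp⟩)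
      ⟨fun _ _ h => Sum.inl_injective (congrArg Subtype.val h), by
        rintro ⟨v | ⟨⟩, hx⟩
        exacts [⟨v, rfl⟩, (hx rfl).elim]⟩
  rw [← det_submatrix_equiv_self e]
  rfl

end Matrix

section WeightedGraph

variable {V : Type*} [Fintype V] [DecidableEq V] (G : SimpleGraph V) (a : V → ℤ)

theorem wDet_eq_det : wDet G a = (wMatrix G a).det := by
  unfold wDet
  congr!

omit [DecidableEq V] in
theorem wMatrix_comap {W : Type*} [Fintype W] {f : W → V} (hf : Function.Injective f) :
    wMatrix (G.comap f) (fun w => a (f w)) = (wMatrix G a).submatrix f f := by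
  ext i j
  simp [wMatrix, hf.eq_iff]

theorem wDetDel_eq_det_deleteIndices (s : Set V) [DecidablePred (· ∈ s)] :
    wDetDel G a s = ((wMatrix G a).deleteIndices s).det := by
  unfold wDetDel wDet
  convert congrArg Matrix.det (wMatrix_comap G a (Subtype.val_injective (p := (· ∉ s))))

omit [DecidableEq V] in
theorem wMatrix_eq_zero_of_not_reachable {u v : V} (h : ¬G.Reachable u v) :
    wMatrix G a u v = 0 := by
  have huv : u ≠ v := by rintro rfl; exact h .rfl
  have hadj : ¬G.Adj u v := fun hadj => h hadj.reachable
  simp [wMatrix, huv, hadj]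

theorem wMatrix_eq_add_single_of_adj {u v : V} (h : G.Adj u v) :
    wMatrix G a = wMatrix (G.deleteEdges {s(u, v)}) a + Matrix.single u v (-1) +
      Matrix.single v u (-1) := by
  ext i j
  by_cases hij : i = j
  · subst hij
    have hi : ¬(u = i ∧ v = i) := fun h' => h.ne (h'.1.trans h'.2.symm)
    have hi' : ¬(v = i ∧ u = i) := fun h' => h.ne (h'.2.trans h'.1.symm)
    simp [wMatrix, hi, hi']
  by_cases he : s(i, j) = s(u, v)
  · rcases Sym2.eq_iff.mp he with ⟨rfl, rfl⟩ | ⟨rfl, rfl⟩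
    · simp [wMatrix, hij, h]
    · simp [wMatrix, hij, h.symm]
  · have hij' : ¬(u = i ∧ v = j) ∧ ¬(v = i ∧ u = j) := by
      constructor <;> rintro ⟨rfl, rfl⟩ <;> simp [Sym2.eq_swap] at he
    have hadj : (G.deleteEdges {s(u, v)}).Adj i j ↔ G.Adj i j := by simp [he]
    simp [wMatrix, hij, hadj, hij', -SimpleGraph.deleteEdges_adj]

omit [DecidableEq V] in
theorem wDetDel_deleteEdges {s : Set V} {u v : V} (h : u ∈ s ∨ v ∈ s) :
    wDetDel (G.deleteEdges {s(u, v)}) a s = wDetDel G a s := by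
  have hG : (G.deleteEdges {s(u, v)}).comap (Subtype.val : {x // x ∉ s} → V) =
      G.comap Subtype.val := by
    ext x y
    have : s(x.1, y.1) ≠ s(u, v) := by
      rintro hxy
      rcases Sym2.eq_iff.mp hxy with ⟨rfl, rfl⟩ | ⟨rfl, rfl⟩
      exacts [h.elim x.2 y.2, h.elim y.2 x.2]
    simp [this]
  rw [wDetDel, hG, wDetDel]

theorem wDet_eq_sub_of_isBridge {u v : V} (huv : G.Adj u v) (hb : G.IsBridge s(u, v)) :
    wDet G a =
      wDet (G.deleteEdges {s(u, v)}) a - wDetDel (G.deleteEdges {s(u, v)}) a {u, v} := by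
  set H := G.deleteEdges {s(u, v)}
  have hS : ∀ x y, H.Reachable u x → ¬H.Reachable u y →
      wMatrix H a x y = 0 ∧ wMatrix H a y x = 0 := fun x y hx hy =>
    ⟨wMatrix_eq_zero_of_not_reachable H a fun hxy => hy (hx.trans hxy),
      wMatrix_eq_zero_of_not_reachable H a fun hyx => hy (hx.trans hyx.symm)⟩
  rw [wDet_eq_det, wMatrix_eq_add_single_of_adj G a huv,
    Matrix.det_add_single_add_single_of_blockDiagonal _ {x | H.Reachable u x}
      (fun x hx y hy => (hS y x hy hx).2) (fun x hx y hy => (hS x y hx hy).1) .rfl hb,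
    wDet_eq_det, wDetDel_eq_det_deleteIndices]
  ring

theorem wMatrix_update_sub (v : V) (c : ℤ) :
    wMatrix G (Function.update a v (a v - c)) = wMatrix G a + Matrix.single v v c := by
  ext i j
  by_cases hij : i = j
  · subst hij
    by_cases hi : i = v
    · subst hi; simp [wMatrix]; ring
    · simp [wMatrix, hi, Ne.symm hi]
  · have hv : ¬(v = i ∧ v = j) := fun h => hij (h.1 ▸ h.2)
    simp [wMatrix, hij, hv]

end WeightedGraph

section Blowup

variable {V : Type*} (G : SimpleGraph V) {P Q : V}

theorem blowupEdgeGraph_comm : blowupEdgeGraph G Q P = blowupEdgeGraph G P Q := by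
  ext (u | u) (v | v) <;> simp [blowupEdgeGraph] <;> tauto

theorem blowupEdgeGraph_comap_inl :
    (blowupEdgeGraph G P Q).comap Sum.inl = G.deleteEdges {s(P, Q)} := by
  ext u v
  simp [blowupEdgeGraph]

theorem blowupEdgeGraph_deleteEdges_comap_inl (x : V) :
    ((blowupEdgeGraph G P Q).deleteEdges {s(Sum.inl x, Sum.inr ())}).comap Sum.inl =
      G.deleteEdges {s(P, Q)} := by
  ext u v
  simp [blowupEdgeGraph]

variable [DecidableEq V] (a : V → ℤ)

theorem blowupEdgeWeights_comm (hPQ : P ≠ Q) :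
    blowupEdgeWeights a Q P = blowupEdgeWeights a P Q := by
  simp only [blowupEdgeWeights, Function.update_comm hPQ.symm]

variable [Fintype V]

theorem wMatrix_blowupEdgeWeights_submatrix_inl (Γ : SimpleGraph (V ⊕ Unit)) (hPQ : P ≠ Q) :
    (wMatrix Γ (blowupEdgeWeights a P Q)).submatrix Sum.inl Sum.inl =
      wMatrix (Γ.comap Sum.inl) a + Matrix.single P P 1 + Matrix.single Q Q 1 := by
  rw [← wMatrix_comap _ _ Sum.inl_injective]
  show wMatrix _ (Function.update (Function.update a P (a P - 1)) Q (a Q - 1)) = _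
  have hQ := wMatrix_update_sub (Γ.comap Sum.inl) (Function.update a P (a P - 1)) Q 1
  rw [Function.update_of_ne hPQ.symm] at hQ
  rw [hQ, wMatrix_update_sub]

theorem wDetDel_blowupEdgeGraph_inr (hPQ : P ≠ Q) :
    wDetDel (blowupEdgeGraph G P Q) (blowupEdgeWeights a P Q) {Sum.inr ()} =
      wDet (G.deleteEdges {s(P, Q)}) a + wDetDel (G.deleteEdges {s(P, Q)}) a {P} +
        wDetDel (G.deleteEdges {s(P, Q)}) a {Q} + wDetDel (G.deleteEdges {s(P, Q)}) a {P, Q} := by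
  rw [wDetDel_eq_det_deleteIndices, Matrix.det_deleteIndices_inr,
    wMatrix_blowupEdgeWeights_submatrix_inl a _ hPQ, blowupEdgeGraph_comap_inl,
    Matrix.det_add_single_diag₂ _ hPQ, wDet_eq_det,
    wDetDel_eq_det_deleteIndices, wDetDel_eq_det_deleteIndices, wDetDel_eq_det_deleteIndices]
  ring

theorem wDet_blowupEdgeGraph_deleteEdges_inl (hPQ : P ≠ Q) :
    wDet ((blowupEdgeGraph G P Q).deleteEdges {s(Sum.inl P, Sum.inr ())})
        (blowupEdgeWeights a P Q) =
      wDet (G.deleteEdges {s(P, Q)}) a + wDetDel (G.deleteEdges {s(P, Q)}) a {P} := by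
  rw [wDet_eq_det]
  set K := wMatrix ((blowupEdgeGraph G P Q).deleteEdges {s(Sum.inl P, Sum.inr ())})
    (blowupEdgeWeights a P Q)
  have h₁₁ : K.toBlocks₁₁ =
      wMatrix (G.deleteEdges {s(P, Q)}) a + Matrix.single P P 1 + Matrix.single Q Q 1 := by
    rw [← blowupEdgeGraph_deleteEdges_comap_inl G P]
    exact wMatrix_blowupEdgeWeights_submatrix_inl a _ hPQ
  have h₂₂ : K.toBlocks₂₂ = 1 := by
    ext ⟨⟩ ⟨⟩
    have hw : blowupEdgeWeights a P Q (Sum.inr ()) = -1 := rfl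
    simp [K, Matrix.toBlocks₂₂, wMatrix, hw]
  have hadjR : ∀ u : V, ((blowupEdgeGraph G P Q).deleteEdges {s(Sum.inl P, Sum.inr ())}).Adj
      (Sum.inr ()) (Sum.inl u) ↔ u = Q := fun u => by
    simp only [SimpleGraph.deleteEdges_adj, Set.mem_singleton_iff, Sym2.eq_swap]
    constructor
    · rintro ⟨hu | hu, hne⟩
      exacts [(hne (by rw [hu])).elim, hu]
    · rintro rfl
      exact ⟨Or.inr rfl, fun h => hPQ (Sum.inl_injective (Sym2.congr_left.mp h)).symm⟩
  have hR : K.toBlocks₁₂ * K.toBlocks₂₁ = Matrix.single Q Q 1 := by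
    ext u v
    by_cases hu : u = Q <;> by_cases hv : v = Q <;>
      simp [K, Matrix.mul_apply, Matrix.toBlocks₁₂, Matrix.toBlocks₂₁, wMatrix, hadjR,
        SimpleGraph.adj_comm _ (Sum.inl _), eq_comm (a := Q), hu, hv,
        -SimpleGraph.deleteEdges_adj]
  rw [← Matrix.fromBlocks_toBlocks K, h₂₂, Matrix.det_fromBlocks_one₂₂, h₁₁, hR,
    add_sub_cancel_right, Matrix.det_add_single_diag, wDet_eq_det, wDetDel_eq_det_deleteIndices,
    one_mul]

end Blowup

theorem forest_det_blowup_edge_labels_general {V : Type*} [Fintype V] [DecidableEq V]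
    (G : SimpleGraph V) (hG : G.IsAcyclic) (a : V → ℤ) (P Q : V)
    (hPQ : G.Adj P Q) :
    wDetDel (blowupEdgeGraph G P Q) (blowupEdgeWeights a P Q) {Sum.inr ()} =
        2 * wDet (G.deleteEdges {s(P, Q)}) a + wDetDel G a {P} + wDetDel G a {Q}
          - wDet G a ∧
      wDet ((blowupEdgeGraph G P Q).deleteEdges {s(Sum.inl P, Sum.inr ())})
          (blowupEdgeWeights a P Q) =
        wDetDel G a {P} + wDet (G.deleteEdges {s(P, Q)}) a ∧
      wDet ((blowupEdgeGraph G P Q).deleteEdges {s(Sum.inl Q, Sum.inr ())})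
          (blowupEdgeWeights a P Q) =
        wDetDel G a {Q} + wDet (G.deleteEdges {s(P, Q)}) a := by
  have hne : P ≠ Q := hPQ.ne
  have hbridge : G.IsBridge s(P, Q) := SimpleGraph.isAcyclic_iff_forall_adj_isBridge.mp hG hPQ
  have hdelP : wDetDel (G.deleteEdges {s(P, Q)}) a {P} = wDetDel G a {P} :=
    wDetDel_deleteEdges G a (Or.inl rfl)
  have hdelQ : wDetDel (G.deleteEdges {s(P, Q)}) a {Q} = wDetDel G a {Q} :=
    wDetDel_deleteEdges G a (Or.inr rfl)
  have hPR := wDet_blowupEdgeGraph_deleteEdges_inl G a hne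
  have hQR := wDet_blowupEdgeGraph_deleteEdges_inl G a hne.symm
  rw [blowupEdgeGraph_comm, blowupEdgeWeights_comm a hne, Sym2.eq_swap (a := Q)] at hQR
  refine ⟨?_, ?_, ?_⟩
  · rw [wDetDel_blowupEdgeGraph_inr G a hne, wDet_eq_sub_of_isBridge G a hPQ hbridge, hdelP,
      hdelQ]
    ring
  · rw [hPR, hdelP, add_comm]
  · rw [hQR, hdelQ, add_comm]

/-- Lemma 5.7, Case 2: after blowing up an edge `(P,Q)` of a weighted forest `Γ`
(with `d = d(Γ) = d(Γ')`), the new vertex `R` satisfies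
`d_R = 2·d_{PQ} + d_P + d_Q - d`, and the new edges satisfy
`d_{PR} = d_P + d_{PQ}` and `d_{QR} = d_Q + d_{PQ}`. -/
theorem forest_det_blowup_edge_labels {V : Type*} [Fintype V] [DecidableEq V]
    (G : SimpleGraph V) (hG : G.IsAcyclic) (a : V → ℤ) (P Q : V)
    (hPQ : G.Adj P Q)
    (hd : wDet (blowupEdgeGraph G P Q) (blowupEdgeWeights a P Q) = wDet G a) :
    wDetDel (blowupEdgeGraph G P Q) (blowupEdgeWeights a P Q) {Sum.inr ()} =
        2 * wDet (G.deleteEdges {s(P, Q)}) a + wDetDel G a {P} + wDetDel G a {Q}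
          - wDet G a ∧
      wDet ((blowupEdgeGraph G P Q).deleteEdges {s(Sum.inl P, Sum.inr ())})
          (blowupEdgeWeights a P Q) =
        wDetDel G a {P} + wDet (G.deleteEdges {s(P, Q)}) a ∧
      wDet ((blowupEdgeGraph G P Q).deleteEdges {s(Sum.inl Q, Sum.inr ())})
          (blowupEdgeWeights a P Q) =
        wDetDel G a {Q} + wDet (G.deleteEdges {s(P, Q)}) a :=
  forest_det_blowup_edge_labels_general G hG a P Q hPQ
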